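/- For any α ∈ A^A and a ∈ A, the partial function β ↦ φ^a(α,β) : A^A ⇀ A is partial sequential. -/

import Mathlib

open Classical

noncomputable section

namespace OostenK2

universe u

/-! ### Finite partial functions -/

/-- Finite partial functions `A ⇀ A`, as finite functional graphs,
ordered by inclusion of graphs. -/
abbrev FPF (A : Type u) : Type u :=
  {p : Set (A × A) // (∀ ⦃a b b'⦄, (a, b) ∈ p → (a, b') ∈ p → b = b') ∧ p.Finite}

variable {A : Type u}

/-- The domain of a finite partial function. -/
def FPF.dom (p : FPF A) : Set A := Prod.fst '' p.val

/-- The empty finite partial function (the root of sequential trees). -/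
def FPF.empty (A : Type u) : FPF A :=
  ⟨∅, fun _ _ _ h => absurd h (Set.notMem_empty _), Set.finite_empty⟩

/-- A total function `α` extends the finite partial function `p`. -/
def agrees (α : A → A) (p : FPF A) : Prop := ∀ ⦃a b⦄, (a, b) ∈ p.val → α a = b

/-- A partial function `β` extends the finite partial function `p`. -/
def agreesP (β : A → Option A) (p : FPF A) : Prop :=
  ∀ ⦃a b⦄, (a, b) ∈ p.val → β a = some b

/-- Two finite partial functions are compatible if their union is a function. -/
def compatFPF (s t : FPF A) : Prop :=
  ∀ ⦃a b b'⦄, (a, b) ∈ s.val → (a, b') ∈ t.val → b = b'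

/-! ### Trees -/

section Trees

variable {X : Type*} [PartialOrder X]

/-- A leaf of `T`: an element of `T` with no strict extension in `T`. -/
def IsLeaf (T : Set X) (p : X) : Prop := p ∈ T ∧ ¬∃ q ∈ T, p < q

/-- `q` is an immediate successor of `p` in `T`. -/
def ImmSucc (T : Set X) (p q : X) : Prop :=
  q ∈ T ∧ p < q ∧ ¬∃ t ∈ T, p < t ∧ t < q

/-- `T` is a tree with root `root`: the root belongs to `T`, lies below every
element, and the predecessors of any element form a chain. -/
def IsTreeOn (root : X) (T : Set X) : Prop :=
  root ∈ T ∧ (∀ p ∈ T, root ≤ p) ∧ ∀ p ∈ T, IsChain (· ≤ ·) {t | t ∈ T ∧ t ≤ p}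

/-- A tree is well-founded iff it has no infinite strictly increasing path. -/
def WellFoundedTree (T : Set X) : Prop :=
  ¬∃ f : ℕ → X, (∀ n, f n ∈ T) ∧ StrictMono f

end Trees

/-- A sequential tree: a tree of finite partial functions, rooted at the empty
function, in which all immediate successors of a non-leaf `p` have domain
`dom p ∪ {a}` for a single `a ∉ dom p`. -/
def IsSeqTree (T : Set (FPF A)) : Prop :=
  IsTreeOn (FPF.empty A) T ∧
  ∀ p ∈ T, ¬IsLeaf T p →
    ∃ a ∉ FPF.dom p, ∀ q, ImmSucc T p q → FPF.dom q = insert a (FPF.dom p)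

/-- A total sequential tree: the immediate successors of a non-leaf `p` are
*all* extensions of `p` with domain `dom p ∪ {a}`. -/
def IsTotalSeqTree (T : Set (FPF A)) : Prop :=
  IsTreeOn (FPF.empty A) T ∧
  ∀ p ∈ T, ¬IsLeaf T p →
    ∃ a ∉ FPF.dom p,
      ∀ q : FPF A, ImmSucc T p q ↔ p < q ∧ FPF.dom q = insert a (FPF.dom p)

/-- `Φ` (as a relation `(A → A) → A → Prop`) is a partial sequential function:
`Φ α = b` iff the path of `α` through some total sequential tree `T` ends in a
leaf `v` with `F v = b`. -/
def SeqRel (Φ : (A → A) → A → Prop) : Prop :=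
  ∃ (T : Set (FPF A)) (F : FPF A → A), IsTotalSeqTree T ∧
    ∀ α b, Φ α b ↔ ∃ v, IsLeaf T v ∧ agrees α v ∧ F v = b

/-- A total bisequential tree: pairs of finite partial functions ordered by
pairwise inclusion; at every non-leaf, either the first or the second component
is interrogated at a single new argument, with all possible answers present. -/
def IsTotalBiTree (T : Set (FPF A × FPF A)) : Prop :=
  IsTreeOn (FPF.empty A, FPF.empty A) T ∧
  ∀ p ∈ T, ¬IsLeaf T p →
    (∃ a ∉ FPF.dom p.1, ∀ q : FPF A × FPF A,
        ImmSucc T p q ↔ q.2 = p.2 ∧ p.1 ≤ q.1 ∧ FPF.dom q.1 = insert a (FPF.dom p.1)) ∨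
    (∃ b ∉ FPF.dom p.2, ∀ q : FPF A × FPF A,
        ImmSucc T p q ↔ q.1 = p.1 ∧ p.2 ≤ q.2 ∧ FPF.dom q.2 = insert b (FPF.dom p.2))

/-- `G` is a total bisequential function. -/
def BiSeqTotal (G : (A → A) → (A → A) → A) : Prop :=
  ∃ (T : Set (FPF A × FPF A)) (F : FPF A × FPF A → A), IsTotalBiTree T ∧
    ∀ α β, ∃ v, IsLeaf T v ∧ agrees α v.1 ∧ agrees β v.2 ∧ G α β = F v

/-! ### Interrogations (total functions)

Throughout, `mk : List A → A` is an injective coding of finite sequences,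
`qp b` is the code `⟨q,b⟩` of a query and `rp c` the code `⟨r,c⟩` of a result. -/

/-- `L` is an interrogation of `β` by `α`. -/
def Interrog (mk : List A → A) (qp : A → A) (α β : A → A) (L : List A) : Prop :=
  ∀ j (hj : j < L.length), ∃ b, α (mk (L.take j)) = qp b ∧ β b = L[j]'hj

/-- `φ_α(β) = c` via interrogations. -/
def phiRel (mk : List A → A) (qp rp : A → A) (α β : A → A) (c : A) : Prop :=
  ∃ L, Interrog mk qp α β L ∧ α (mk L) = rp c

/-- `L` is an `a`-interrogation of `β` by `α`. -/
def AInterrog (mk : List A → A) (qp : A → A) (a : A) (α β : A → A) (L : List A) : Prop :=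
  ∀ j (hj : j < L.length), ∃ b, α (mk (a :: L.take j)) = qp b ∧ β b = L[j]'hj

/-- `φ^a(α,β) = c` via `a`-interrogations. -/
def phiA (mk : List A → A) (qp rp : A → A) (a : A) (α β : A → A) (c : A) : Prop :=
  ∃ L, AInterrog mk qp a α β L ∧ α (mk (a :: L)) = rp c

/-- The application of `K₂(A)`: `αβ` is defined with value `γ` iff
`φ^a(α,β) = γ a` for every `a`. -/
def AppRel (mk : List A → A) (qp rp : A → A) (α β γ : A → A) : Prop :=
  ∀ a, phiA mk qp rp a α β (γ a)

/-! ### Partial combinatory algebras (abstractly) -/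

/-- A set with a partial binary application. -/
structure PCAStruct (X : Type*) where
  app : X → X → Part X

/-- Extension of the application to `Part`; `Part`-equality is Kleene equality. -/
def pap {X : Type*} (S : PCAStruct X) (u v : Part X) : Part X :=
  u.bind fun a => v.bind fun b => S.app a b

/-- `S` is a partial combinatory algebra: there are `k`, `s` with
`kxy = x` (everywhere defined), `sxy` defined, and `sxyz ≃ (xz)(yz)`. -/
def IsPCA {X : Type*} (S : PCAStruct X) : Prop :=
  ∃ k s : X,
    (∀ x y : X, pap S (S.app k x) (Part.some y) = Part.some x) ∧
    (∀ x y : X, (pap S (S.app s x) (Part.some y)).Dom) ∧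
    (∀ x y z : X,
      pap S (pap S (S.app s x) (Part.some y)) (Part.some z)
        = pap S (S.app x z) (S.app y z))

/-- `t`, `f` are Booleans of `S`: distinct, with a definition-by-cases combinator. -/
def IsBooleans {X : Type*} (S : PCAStruct X) (t f : X) : Prop :=
  t ≠ f ∧ ∃ C : X, ∀ a b : X,
    pap S (pap S (S.app C t) (Part.some a)) (Part.some b) = Part.some a ∧
    pap S (pap S (S.app C f) (Part.some a)) (Part.some b) = Part.some b

/-- Applicative morphism `γ : S → T`: a total relation such that some realizer
`r` tracks application. -/
def IsAppMor {X Y : Type*} (S : PCAStruct X) (T : PCAStruct Y) (γ : X → Set Y) : Prop :=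
  (∀ x, (γ x).Nonempty) ∧
  ∃ r : Y, ∀ x x' z : X, z ∈ S.app x x' → ∀ b ∈ γ x, ∀ b' ∈ γ x',
    ∃ w, w ∈ pap T (T.app r b) (Part.some b') ∧ w ∈ γ z

/-- The preorder on applicative morphisms. -/
def morLE {X Y : Type*} (T : PCAStruct Y) (γ γ' : X → Set Y) : Prop :=
  ∃ s : Y, ∀ x : X, ∀ b ∈ γ x, ∃ c, c ∈ T.app s b ∧ c ∈ γ' x

def morEquiv {X Y : Type*} (T : PCAStruct Y) (γ γ' : X → Set Y) : Prop :=
  morLE T γ γ' ∧ morLE T γ' γ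

/-- Composition of applicative morphisms (as total relations). -/
def morComp {X Y Z : Type*} (γ : X → Set Y) (ε : Y → Set Z) : X → Set Z :=
  fun x => ⋃ y ∈ γ x, ε y

/-- Decidability of a morphism w.r.t. chosen Booleans. -/
def IsDecidableMor {X Y : Type*} (T : PCAStruct Y) (γ : X → Set Y)
    (tX fX : X) (tY fY : Y) : Prop :=
  ∃ d : Y, (∀ b ∈ γ tX, T.app d b = Part.some tY) ∧
    (∀ b ∈ γ fX, T.app d b = Part.some fY)

/-- `rf` represents the partial function `f : X ⇀ X` w.r.t. `γ`. -/
def RepresentsPFun {X Y : Type*} (T : PCAStruct Y) (γ : X → Set Y)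
    (f : X → Option X) (rf : Y) : Prop :=
  ∀ a x, f a = some x → ∀ b ∈ γ a, ∃ c, c ∈ T.app rf b ∧ c ∈ γ x

/-- The pca `K₂(A)` on `A^A` (application via `a`-interrogations). -/
def K2 (mk : List A → A) (qp rp : A → A) : PCAStruct (A → A) where
  app α β := ⟨∀ a, ∃ c, phiA mk qp rp a α β c, fun h a => (h a).choose⟩

/-! ### Interrogations for partial functions -/

/-- Interrogation of a partial `β` by a partial `α`. -/
def PInterrog (mk : List A → A) (qp : A → A) (α β : A → Option A) (L : List A) : Prop :=
  ∀ j (hj : j < L.length), ∃ b, α (mk (L.take j)) = some (qp b) ∧ β b = some (L[j]'hj)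

/-- `φ_α(β) = c` for partial functions. -/
def phiPRel (mk : List A → A) (qp rp : A → A) (α β : A → Option A) (c : A) : Prop :=
  ∃ L, PInterrog mk qp α β L ∧ α (mk L) = some (rp c)

/-- `a`-interrogation of a partial `β` by a partial `α`. -/
def PAInterrog (mk : List A → A) (qp : A → A) (a : A) (α β : A → Option A)
    (L : List A) : Prop :=
  ∀ j (hj : j < L.length), ∃ b, α (mk (a :: L.take j)) = some (qp b) ∧ β b = some (L[j]'hj)

/-- `φ^a(α,β) = c` for partial functions. -/
def phiPA (mk : List A → A) (qp rp : A → A) (a : A) (α β : A → Option A) (c : A) : Prop :=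
  ∃ L, PAInterrog mk qp a α β L ∧ α (mk (a :: L)) = some (rp c)

/-- The (total!) application of `K₂^p(A)` on partial functions. -/
def K2pApp (mk : List A → A) (qp rp : A → A) (α β : A → Option A) : A → Option A :=
  fun a => if h : ∃ c, phiPA mk qp rp a α β c then some h.choose else none

/-- `K₂^p(A)` as a `PCAStruct` (with everywhere-defined application). -/
def K2p (mk : List A → A) (qp rp : A → A) : PCAStruct (A → Option A) :=
  ⟨fun α β => Part.some (K2pApp mk qp rp α β)⟩

/-! ### A pca with standard structure (Booleans, pairing, tuple coding, recursion) -/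

/-- A pca together with the standard derived structure: Booleans with a case
combinator, pairing, an injective standard tuple coding with combinators
manipulating it, and a fixed-point combinator. All of these exist in any
(nontrivial) pca. -/
structure StdPCA (A : Type u) where
  S : PCAStruct A
  isPCA : IsPCA S
  t : A
  f : A
  t_ne_f : t ≠ f
  Cc : A
  C_t : ∀ a b : A, pap S (pap S (S.app Cc t) (Part.some a)) (Part.some b) = Part.some a
  C_f : ∀ a b : A, pap S (pap S (S.app Cc f) (Part.some a)) (Part.some b) = Part.some b
  pairF : A → A → A
  Pc : A
  P0 : A
  P1 : A
  P_spec : ∀ x y : A, pap S (S.app Pc x) (Part.some y) = Part.some (pairF x y)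
  P0_spec : ∀ x y : A, S.app P0 (pairF x y) = Part.some x
  P1_spec : ∀ x y : A, S.app P1 (pairF x y) = Part.some y
  tup : List A → A
  tup_inj : Function.Injective tup
  CONS : A
  CONS_spec : ∀ (x : A) (L : List A),
    pap S (S.app CONS x) (Part.some (tup L)) = Part.some (tup (x :: L))
  SNOC : A
  SNOC_spec : ∀ (L : List A) (y : A),
    pap S (S.app SNOC (tup L)) (Part.some y) = Part.some (tup (L ++ [y]))
  Zc : A
  Z_spec : ∀ g : A, (S.app Zc g).Dom ∧ ∀ zg ∈ S.app Zc g, ∀ x : A,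
    S.app zg x = pap S (S.app g zg) (Part.some x)

/-- The partial function `x ↦ a·x` represented by `a ∈ A`. -/
def abar (P : StdPCA A) (a : A) : A → Option A :=
  fun x => if h : (P.S.app a x).Dom then some ((P.S.app a x).get h) else none

/-- An `x`-interrogation of the oracle `g : A ⇀ A` by `a ∈ A`, inside the pca. -/
def OInterrog (P : StdPCA A) (g : A → Option A) (a x : A) (L : List A) : Prop :=
  ∀ j (hj : j < L.length), ∃ v,
    P.S.app a (P.tup (x :: L.take j)) = Part.some (P.pairF P.f v) ∧ g v = some (L[j]'hj)

/-- The oracle application of `A[g]` : `a ·^g x = c`. -/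
def oapp (P : StdPCA A) (g : A → Option A) (a x c : A) : Prop :=
  ∃ L, OInterrog P g a x L ∧ P.S.app a (P.tup (x :: L)) = Part.some (P.pairF P.t c)

/-- `fn ≤_T g` : `fn` is representable in `A[g]`. -/
def leT (P : StdPCA A) (fn g : A → Option A) : Prop :=
  ∃ a : A, ∀ x y, fn x = some y → oapp P g a x y

/-- `j` is the join `f ⊔ g`. -/
def JoinSpec (P : StdPCA A) (f g j : A → Option A) : Prop :=
  (∀ x, j (P.pairF P.t x) = f x) ∧ (∀ x, j (P.pairF P.f x) = g x) ∧
  (∀ y, (∀ x, y ≠ P.pairF P.t x ∧ y ≠ P.pairF P.f x) → j y = none)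

/-- `K₂(A)` (built from the coding `mk`, `q`, `r`) is compatible with the pca
structure on `A`: elements of `A` translate between the codings and between
`q, r` and `⊥, ⊤`. -/
def CompatCoding (P : StdPCA A) (mk : List A → A) (q r : A) : Prop :=
  (∃ a : A, ∀ L, P.S.app a (mk L) = Part.some (P.tup L)) ∧
  (∃ b : A, ∀ L, P.S.app b (P.tup L) = Part.some (mk L)) ∧
  (∃ c : A, P.S.app c q = Part.some P.f ∧ P.S.app c r = Part.some P.t)

/-! The interrogation of `β` by `α` is simulated on finite approximations `p` of `β`: a node `p`
of the tree is a leaf as soon as the interrogation of `p` produces an answer `⟨r,c⟩`, and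
otherwise its children extend `p` at the next point queried outside `dom p` (at an arbitrary
fresh point if there is none). Along the path of a `β` with `φ^a(α,β) = c`, every new point
of the domain is one of the finitely many points queried by the interrogation witnessing
`φ^a(α,β) = c`, so the path ends in a leaf, labelled `c` by determinism of interrogations. -/

namespace FPF

lemma mem_dom {p : FPF A} {b : A} : b ∈ p.dom ↔ ∃ v, (b, v) ∈ p.val := by
  simp [FPF.dom]

lemma dom_finite (p : FPF A) : p.dom.Finite := p.2.2.image _

def update (p : FPF A) (b v : A) : FPF A :=
  ⟨insert (b, v) {x ∈ p.val | x.1 ≠ b}, by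
    refine ⟨?_, (p.2.2.subset (Set.sep_subset _ _)).insert _⟩
    rintro x w w' (h | h) (h' | h') <;> first | exact p.2.1 h.1 h'.1 | simp_all⟩

lemma mem_update (p : FPF A) (b v : A) : (b, v) ∈ (p.update b v).val := Set.mem_insert _ _

variable {p : FPF A} {b : A}

lemma update_val (hb : b ∉ p.dom) (v : A) : (p.update b v).val = insert (b, v) p.val := by
  have hsep : {x ∈ p.val | x.1 ≠ b} = p.val :=
    Set.sep_eq_self_iff_mem_true.2 fun x hx hxb => hb (mem_dom.2 ⟨x.2, hxb ▸ hx⟩)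
  simp only [update, hsep]

lemma dom_update (hb : b ∉ p.dom) (v : A) : (p.update b v).dom = insert b p.dom := by
  rw [FPF.dom, update_val hb, Set.image_insert_eq, FPF.dom]

lemma lt_update (hb : b ∉ p.dom) (v : A) : p < p.update b v := by
  refine lt_of_le_of_ne (fun x hx => ?_) fun h => hb (mem_dom.2 ⟨v, h ▸ mem_update p b v⟩)
  rw [update_val hb]
  exact Set.mem_insert_of_mem _ hx

lemma eq_update_of_lt {u : FPF A} (hb : b ∉ p.dom) (hlt : p < u)
    (hdom : u.dom = insert b p.dom) {v : A} (hv : (b, v) ∈ u.val) : u = p.update b v := by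
  refine Subtype.ext (Set.Subset.antisymm (fun ⟨x, w⟩ hx => ?_) ?_)
  · rw [update_val hb]
    obtain rfl | hx' := (hdom ▸ mem_dom.2 ⟨w, hx⟩ : x ∈ insert b p.dom)
    · exact u.2.1 hx hv ▸ Set.mem_insert _ _
    · obtain ⟨w', hw'⟩ := mem_dom.1 hx'
      exact u.2.1 hx (hlt.le hw') ▸ Set.mem_insert_of_mem _ hw'
  · rw [update_val hb]
    exact Set.insert_subset hv hlt.le

end FPF

lemma agrees_iff_subset_graph {β : A → A} {p : FPF A} :
    agrees β p ↔ p.val ⊆ Function.graph β :=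
  ⟨fun h _ hx => h hx, fun h _ _ hx => h hx⟩

lemma agrees_update {β : A → A} {p : FPF A} {b : A} (hb : b ∉ p.dom) (h : agrees β p) :
    agrees β (p.update b (β b)) := by
  rw [agrees_iff_subset_graph, FPF.update_val hb] at *
  exact Set.insert_subset rfl h

section QueryTree

variable (next : FPF A → Option A)

def descend : FPF A → List A → Option (FPF A)
  | p, [] => some p
  | p, v :: V => (next p).bind fun b => descend (p.update b v) V

def queryTree : Set (FPF A) := {p | ∃ V, descend next (FPF.empty A) V = some p}

variable {next}

lemma descend_cons {p : FPF A} {v : A} {V : List A} :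
    descend next p (v :: V) = (next p).bind fun b => descend next (p.update b v) V := rfl

lemma descend_append (V W : List A) (p : FPF A) :
    descend next p (V ++ W) = (descend next p V).bind fun u => descend next u W := by
  induction V generalizing p with
  | nil => rfl
  | cons v V ih =>
    simp only [List.cons_append, descend_cons, Option.bind_assoc, ih]

lemma child_mem_queryTree {p : FPF A} {b : A} (hp : p ∈ queryTree next)
    (hb : next p = some b) (v : A) : p.update b v ∈ queryTree next := by
  obtain ⟨V, hV⟩ := hp
  exact ⟨V ++ [v], by simp [descend_append, hV, hb, descend]⟩

variable (hnext : ∀ p b, next p = some b → b ∉ p.dom)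
include hnext

lemma le_of_descend {V : List A} {p u : FPF A} (h : descend next p V = some u) : p ≤ u := by
  induction V generalizing p with
  | nil => exact (Option.some.inj h).le
  | cons v V ih =>
    obtain ⟨b, hb, hrun⟩ := Option.bind_eq_some_iff.1 h
    exact (FPF.lt_update (hnext p b hb) v).le.trans (ih hrun)

lemma prefix_of_descend {V W : List A} {p s u : FPF A} (hV : descend next p V = some s)
    (hW : descend next p W = some u) (hsu : s ≤ u) : V <+: W := by
  induction V generalizing p W with
  | nil => exact List.nil_prefix
  | cons v V ih =>
    obtain ⟨b, hb, hrunV⟩ := Option.bind_eq_some_iff.1 hV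
    have hvs := le_of_descend hnext hrunV
    cases W with
    | nil =>
      rw [descend, Option.some_inj] at hW
      subst hW
      exact absurd (hvs.trans hsu) (FPF.lt_update (hnext p b hb) v).not_ge
    | cons w W =>
      rw [descend_cons, hb, Option.bind_some] at hW
      obtain rfl : v = w :=
        u.2.1 ((hvs.trans hsu) (FPF.mem_update p b v))
          (le_of_descend hnext hW (FPF.mem_update p b w))
      exact List.cons_prefix_cons.2 ⟨rfl, ih hrunV hW⟩

lemma exists_descend_of_le {s u : FPF A} (hs : s ∈ queryTree next) (hu : u ∈ queryTree next)
    (hsu : s ≤ u) : ∃ W, descend next s W = some u := by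
  obtain ⟨V, hV⟩ := hs
  obtain ⟨V', hV'⟩ := hu
  obtain ⟨W, rfl⟩ := prefix_of_descend hnext hV hV' hsu
  rw [descend_append, hV, Option.bind_some] at hV'
  exact ⟨W, hV'⟩

lemma exists_update_le {p t : FPF A} (hp : p ∈ queryTree next) (ht : t ∈ queryTree next)
    (hpt : p < t) : ∃ b, next p = some b ∧ ∃ w, p.update b w ≤ t := by
  obtain ⟨W, hW⟩ := exists_descend_of_le hnext hp ht hpt.le
  cases W with
  | nil => exact absurd (Option.some.inj hW) hpt.ne
  | cons w W =>
    obtain ⟨b, hb, hrun⟩ := Option.bind_eq_some_iff.1 hW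
    exact ⟨b, hb, w, le_of_descend hnext hrun⟩

lemma isLeaf_queryTree_iff {p : FPF A} :
    IsLeaf (queryTree next) p ↔ p ∈ queryTree next ∧ next p = none := by
  refine ⟨fun ⟨hp, hmax⟩ => ⟨hp, ?_⟩, fun ⟨hp, hnone⟩ => ⟨hp, ?_⟩⟩
  · cases hb : next p with
    | none => rfl
    | some b => exact absurd ⟨_, child_mem_queryTree hp hb b, FPF.lt_update (hnext p b hb) b⟩ hmax
  · rintro ⟨t, ht, hpt⟩
    obtain ⟨b, hb, -⟩ := exists_update_le hnext hp ht hpt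
    simp [hnone] at hb

lemma immSucc_queryTree_iff {p u : FPF A} {b : A} (hp : p ∈ queryTree next)
    (hb : next p = some b) :
    ImmSucc (queryTree next) p u ↔ p < u ∧ u.dom = insert b p.dom := by
  have hbp := hnext p b hb
  constructor
  · rintro ⟨hu, hpu, hno⟩
    obtain ⟨b', hb', w, hwu⟩ := exists_update_le hnext hp hu hpu
    cases hb.symm.trans hb'
    obtain rfl : p.update b w = u := hwu.eq_of_not_lt fun hlt =>
      hno ⟨_, child_mem_queryTree hp hb w, FPF.lt_update hbp w, hlt⟩
    exact ⟨FPF.lt_update hbp w, FPF.dom_update hbp w⟩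
  · rintro ⟨hpu, hdom⟩
    obtain ⟨v, hv⟩ := FPF.mem_dom.1 (hdom ▸ Set.mem_insert b p.dom)
    obtain rfl := FPF.eq_update_of_lt hbp hpu hdom hv
    refine ⟨child_mem_queryTree hp hb v, hpu, ?_⟩
    rintro ⟨t, ht, hpt, htu⟩
    obtain ⟨b', hb', w, hwt⟩ := exists_update_le hnext hp ht hpt
    cases hb.symm.trans hb'
    obtain rfl : w = v := (p.update b v).2.1 (htu.le (hwt (FPF.mem_update p b w))) hv
    exact htu.not_ge hwt

lemma isTreeOn_queryTree : IsTreeOn (FPF.empty A) (queryTree next) := by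
  refine ⟨⟨[], rfl⟩, fun p _ x hx => absurd hx (Set.notMem_empty x), ?_⟩
  rintro p ⟨V, hV⟩ s ⟨⟨Vs, hVs⟩, hsp⟩ t ⟨⟨Vt, hVt⟩, htp⟩ -
  rcases List.prefix_or_prefix_of_prefix (prefix_of_descend hnext hVs hV hsp)
    (prefix_of_descend hnext hVt hV htp) with ⟨W, rfl⟩ | ⟨W, rfl⟩
  · rw [descend_append, hVs, Option.bind_some] at hVt
    exact Or.inl (le_of_descend hnext hVt)
  · rw [descend_append, hVt, Option.bind_some] at hVs
    exact Or.inr (le_of_descend hnext hVs)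

theorem isTotalSeqTree_queryTree : IsTotalSeqTree (queryTree next) := by
  refine ⟨isTreeOn_queryTree hnext, fun p hp hleaf => ?_⟩
  obtain ⟨b, hb⟩ := Option.ne_none_iff_exists'.1
    fun hnone => hleaf ((isLeaf_queryTree_iff hnext).2 ⟨hp, hnone⟩)
  exact ⟨b, hnext p b hb, fun u => immSucc_queryTree_iff hnext hp hb⟩

end QueryTree

section Interrogation

variable (mk : List A → A) (qp rp : A → A) (a : A) (α : A → A)

/-- `AInterrog` with the queried function replaced by a relation `G ⊆ A × A`: a finite
partial function, or the graph of a total one. -/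
def RelAInterrog (G : Set (A × A)) (L : List A) : Prop :=
  ∀ j (hj : j < L.length), ∃ b, α (mk (a :: L.take j)) = qp b ∧ (b, L[j]) ∈ G

def relPhiA (G : Set (A × A)) (c : A) : Prop :=
  ∃ L, RelAInterrog mk qp a α G L ∧ α (mk (a :: L)) = rp c

lemma phiA_iff_relPhiA_graph {β : A → A} {c : A} :
    phiA mk qp rp a α β c ↔ relPhiA mk qp rp a α (Function.graph β) c := Iff.rfl

variable {mk qp rp a α} {G G' : Set (A × A)} {L L' : List A}

lemma RelAInterrog.mono (h : RelAInterrog mk qp a α G L) (hG : G ⊆ G') :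
    RelAInterrog mk qp a α G' L :=
  fun j hj => (h j hj).imp fun _ hb => ⟨hb.1, hG hb.2⟩

lemma relPhiA.mono {c : A} (h : relPhiA mk qp rp a α G c) (hG : G ⊆ G') :
    relPhiA mk qp rp a α G' c :=
  h.imp fun _ hL => ⟨hL.1.mono hG, hL.2⟩

lemma RelAInterrog.concat (hL : RelAInterrog mk qp a α G L) {b x : A}
    (hb : α (mk (a :: L)) = qp b) (hbx : (b, x) ∈ G) : RelAInterrog mk qp a α G (L ++ [x]) := by
  intro j hj
  rcases (by simpa [Nat.lt_succ_iff] using hj : j ≤ L.length).lt_or_eq with hj' | rfl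
  · simpa [List.take_append_of_le_length hj'.le, List.getElem_append_left hj'] using hL j hj'
  · simpa using ⟨b, hb, hbx⟩

variable (hq : qp.Injective) (hG : ∀ ⦃x y y'⦄, (x, y) ∈ G → (x, y') ∈ G → y = y')
include hq hG

lemma RelAInterrog.take_eq_take (hL : RelAInterrog mk qp a α G L)
    (hL' : RelAInterrog mk qp a α G L') {k : ℕ} (hk : k ≤ L.length) (hk' : k ≤ L'.length) :
    L.take k = L'.take k := by
  induction k with
  | zero => simp
  | succ k ih =>
    obtain ⟨b, hb, hbG⟩ := hL k hk
    obtain ⟨b', hb', hbG'⟩ := hL' k hk'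
    have hkk := ih (by omega) (by omega)
    obtain rfl : b = b' := hq (hb.symm.trans (hkk ▸ hb'))
    rw [← List.take_concat_get' _ _ hk, ← List.take_concat_get' _ _ hk', hkk, hG hbG hbG']

lemma RelAInterrog.prefix_or_prefix (hL : RelAInterrog mk qp a α G L)
    (hL' : RelAInterrog mk qp a α G L') : L <+: L' ∨ L' <+: L := by
  rcases le_total L.length L'.length with h | h
  · left
    rw [List.prefix_iff_eq_take]
    simpa using hL.take_eq_take hq hG hL' le_rfl h
  · right
    rw [List.prefix_iff_eq_take]
    simpa using (hL.take_eq_take hq hG hL' h le_rfl).symm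

variable (hqr : ∀ b c, qp b ≠ rp c)
include hqr

/-- An interrogation that has produced an answer cannot be continued. -/
lemma RelAInterrog.prefix_of_answer {c : A} (hL : RelAInterrog mk qp a α G L)
    (hc : α (mk (a :: L)) = rp c) (hL' : RelAInterrog mk qp a α G L') : L' <+: L := by
  rcases hL.prefix_or_prefix hq hG hL' with hpre | hpre
  · rcases hpre.length_le.lt_or_eq with hlt | hlen
    · obtain ⟨b, hb, -⟩ := hL' L.length hlt
      rw [← List.prefix_iff_eq_take.1 hpre, hc] at hb
      exact absurd hb.symm (hqr b c)
    · exact hpre.eq_of_length hlen ▸ List.prefix_refl L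
  · exact hpre

lemma relPhiA.unique (hr : rp.Injective) {c c' : A} (h : relPhiA mk qp rp a α G c)
    (h' : relPhiA mk qp rp a α G c') : c = c' := by
  obtain ⟨L, hL, hc⟩ := h
  obtain ⟨L', hL', hc'⟩ := h'
  have hpre := hL.prefix_of_answer hq hG hqr hc hL'
  obtain rfl := hpre.eq_of_length (hpre.length_le.antisymm
    (hL'.prefix_of_answer hq hG hqr hc' hL).length_le)
  exact hr (hc.symm.trans hc')

end Interrogation

lemma graph_functional (β : A → A) :
    ∀ ⦃x y y'⦄, (x, y) ∈ Function.graph β → (x, y') ∈ Function.graph β → y = y' :=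
  fun _ _ _ h h' => h.symm.trans h'

section PhiTree

variable (mk : List A → A) (qp rp : A → A) (a : A) (α : A → A)

def AsksFresh (p : FPF A) (b : A) : Prop :=
  b ∉ p.dom ∧ ∃ L, RelAInterrog mk qp a α p.val L ∧ α (mk (a :: L)) = qp b

/-- When the interrogation of `p` neither answers nor asks outside `dom p`, `p` is extended at
an arbitrary fresh point: no total `β` on which `φ^a(α, ·)` is defined passes through `p`. -/
def nextQuery [Infinite A] (p : FPF A) : Option A :=
  if ∃ c, relPhiA mk qp rp a α p.val c then none
  else if h : ∃ b, AsksFresh mk qp a α p b then some h.choose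
  else some p.dom_finite.exists_notMem.choose

def leafValue (p : FPF A) : A :=
  if h : ∃ c, relPhiA mk qp rp a α p.val c then h.choose else a

variable {mk qp rp a α} {p : FPF A} {b c : A}

lemma relPhiA_leafValue (h : ∃ c, relPhiA mk qp rp a α p.val c) :
    relPhiA mk qp rp a α p.val (leafValue mk qp rp a α p) := by
  rw [leafValue, dif_pos h]
  exact h.choose_spec

lemma exists_asksFresh {β : A → A} {L : List A} (hagr : agrees β p)
    (hL : RelAInterrog mk qp a α (Function.graph β) L) (hc : α (mk (a :: L)) = rp c)
    (hno : ¬∃ c, relPhiA mk qp rp a α p.val c) : ∃ b, AsksFresh mk qp a α p b := by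
  by_contra hfresh
  have htake : ∀ k ≤ L.length, RelAInterrog mk qp a α p.val (L.take k) := by
    intro k hk
    induction k with
    | zero => simp [RelAInterrog]
    | succ k ih =>
      obtain ⟨b, hb, hβb⟩ := hL k hk
      have hbp : b ∈ p.dom := by
        by_contra hbp
        exact hfresh ⟨b, hbp, L.take k, ih (by omega), hb⟩
      obtain ⟨v, hv⟩ := FPF.mem_dom.1 hbp
      rw [← List.take_concat_get' _ _ hk]
      exact (ih (by omega)).concat hb ((hagr hv).symm.trans hβb ▸ hv)
  exact hno ⟨c, L, by simpa using htake L.length le_rfl, hc⟩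

variable [Infinite A]

lemma notMem_dom_of_nextQuery_eq_some (h : nextQuery mk qp rp a α p = some b) : b ∉ p.dom := by
  unfold nextQuery at h
  split_ifs at h with _ hfresh <;> cases h
  · exact hfresh.choose_spec.1
  · exact p.dom_finite.exists_notMem.choose_spec

lemma nextQuery_eq_none_iff :
    nextQuery mk qp rp a α p = none ↔ ∃ c, relPhiA mk qp rp a α p.val c := by
  unfold nextQuery
  split_ifs <;> simp_all

lemma asksFresh_of_nextQuery_eq_some (h : nextQuery mk qp rp a α p = some b)
    (hfresh : ∃ b, AsksFresh mk qp a α p b) : AsksFresh mk qp a α p b := by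
  unfold nextQuery at h
  split_ifs at h
  cases h
  exact hfresh.choose_spec

lemma isLeaf_queryTree_nextQuery_iff :
    IsLeaf (queryTree (nextQuery mk qp rp a α)) p ↔
      p ∈ queryTree (nextQuery mk qp rp a α) ∧ ∃ c, relPhiA mk qp rp a α p.val c := by
  rw [isLeaf_queryTree_iff fun _ _ => notMem_dom_of_nextQuery_eq_some, nextQuery_eq_none_iff]

variable (hq : qp.Injective) (hqr : ∀ b c, qp b ≠ rp c)
include hq hqr

lemma nextQuery_mem_queries {β : A → A} {L : List A} (hagr : agrees β p)
    (hL : RelAInterrog mk qp a α (Function.graph β) L) (hc : α (mk (a :: L)) = rp c)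
    (h : nextQuery mk qp rp a α p = some b) :
    ∃ j < L.length, α (mk (a :: L.take j)) = qp b := by
  have hno : ¬∃ c, relPhiA mk qp rp a α p.val c := by
    rw [← nextQuery_eq_none_iff, h]
    exact Option.some_ne_none b
  obtain ⟨-, L', hL', hb⟩ := asksFresh_of_nextQuery_eq_some h (exists_asksFresh hagr hL hc hno)
  have hpre : L' <+: L := hL.prefix_of_answer hq (graph_functional β) hqr hc
    (hL'.mono (agrees_iff_subset_graph.1 hagr))
  refine ⟨L'.length, hpre.length_le.lt_of_ne fun hlen => ?_, ?_⟩
  · rw [hpre.eq_of_length hlen, hc] at hb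
    exact hqr b c hb.symm
  · rwa [← List.prefix_iff_eq_take.1 hpre]

theorem exists_leaf_of_agrees (hr : rp.Injective) {β : A → A}
    (hβ : relPhiA mk qp rp a α (Function.graph β) c) (hp : p ∈ queryTree (nextQuery mk qp rp a α))
    (hagr : agrees β p) :
    ∃ v, IsLeaf (queryTree (nextQuery mk qp rp a α)) v ∧ agrees β v ∧
      leafValue mk qp rp a α v = c := by
  obtain ⟨L, hL, hc⟩ := hβ
  set Q : Set A := qp ⁻¹' ((fun j => α (mk (a :: L.take j))) '' Set.Iio L.length)
  have hQ : Q.Finite := ((Set.finite_Iio _).image _).preimage hq.injOn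
  induction hn : (Q \ p.dom).ncard using Nat.strong_induction_on generalizing p with
  | _ n ih =>
  cases hnext : nextQuery mk qp rp a α p with
  | none =>
    have hans := nextQuery_eq_none_iff.1 hnext
    refine ⟨p, isLeaf_queryTree_nextQuery_iff.2 ⟨hp, hans⟩, hagr,
      relPhiA.unique hq (graph_functional β) hqr hr ?_ ⟨L, hL, hc⟩⟩
    exact (relPhiA_leafValue hans).mono (agrees_iff_subset_graph.1 hagr)
  | some b =>
    have hbp := notMem_dom_of_nextQuery_eq_some hnext
    obtain ⟨j, hj, hb⟩ := nextQuery_mem_queries hq hqr hagr hL hc hnext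
    have hbQ : b ∈ Q \ p.dom := ⟨⟨j, hj, hb⟩, hbp⟩
    refine ih _ (hn ▸ Set.ncard_lt_ncard ?_ hQ.sdiff) (child_mem_queryTree hp hnext (β b))
      (agrees_update hbp hagr) rfl
    rw [FPF.dom_update hbp]
    exact ⟨Set.sdiff_subset_sdiff_right (Set.subset_insert _ _),
      fun h => (h hbQ).2 (Set.mem_insert b _)⟩

end PhiTree

theorem seqRel_phiA [Infinite A] (mk : List A → A) {qp rp : A → A} (hq : qp.Injective)
    (hr : rp.Injective) (hqr : ∀ b c, qp b ≠ rp c) (a : A) (α : A → A) :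
    SeqRel (phiA mk qp rp a α) := by
  refine ⟨queryTree (nextQuery mk qp rp a α), leafValue mk qp rp a α,
    isTotalSeqTree_queryTree fun _ _ => notMem_dom_of_nextQuery_eq_some,
    fun β c => (phiA_iff_relPhiA_graph mk qp rp a α).trans ⟨?_, ?_⟩⟩
  · exact fun hβ => exists_leaf_of_agrees hq hqr hr hβ ⟨[], rfl⟩
      fun _ _ h => absurd h (Set.notMem_empty _)
  · rintro ⟨v, hv, hagr, rfl⟩
    exact (relPhiA_leafValue (isLeaf_queryTree_nextQuery_iff.1 hv).2).mono
      (agrees_iff_subset_graph.1 hagr)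

/-- For any `α ∈ A^A` and `a ∈ A`, the partial function
`β ↦ φ^a(α,β)` is partial sequential. -/
theorem statement4 {A : Type u} [Infinite A] (code : List A → A)
    (hcode : Function.Injective code) (q r : A) (hqr : q ≠ r)
    (α : A → A) (a : A) :
    SeqRel (fun β c => phiA code (fun x => code [q, x]) (fun x => code [r, x]) a α β c) :=
  seqRel_phiA code (fun x y h => by simpa using hcode h) (fun x y h => by simpa using hcode h)
    (fun b c h => hqr (List.cons.inj (hcode h)).1) a α

end OostenK2
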